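/- Let n, V, H be positive integers, E ∈ [−1,1]^{H×n} with columns e⁽ⁱ⁾, B ∈ ℝ^{V×H} with rows b_v, with the feasible set nonempty (there exists X ∈ [−1,1]^{V×n} with (1/n)·E·x_v = b_v for all v). With the Hamming loss ℓ_H(x, x̃) = Σ_{v=1}^V (1 − x_v·x̃_v)/2, the minimax value inf over X̃ ∈ [−1,1]^{V×n} of the supremum over feasible X of (1/n)·Σ_{i=1}^n ℓ_H(x⁽ⁱ⁾, x̃⁽ⁱ⁾) equals (1/2)·Σ_{v=1}^V inf_{w ∈ ℝ^H} [ −b_vᵀw + (1/n)·Σ_{i=1}^n max(|wᵀe⁽ⁱ⁾|, 1) ]; moreover, if w_v* attains the v-th infimum, the reconstructions x̃_v⁽ⁱ⁾ = max(−1, min(w_v*ᵀe⁽ⁱ⁾, 1)) attain the minimax value. -/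
import Mathlib


/-- The Hamming loss `ℓ_H(x, x̃) = Σ_v (1 - x_v·x̃_v)/2` between randomized bit vectors. -/
noncomputable def hammingLoss {V : ℕ} (x xt : Fin V → ℝ) : ℝ :=
  ∑ v, (1 - x v * xt v) / 2

set_option maxHeartbeats 1000000

lemma swap_sum (n H : ℕ) (E : Fin H → Fin n → ℝ) (w : Fin H → ℝ) (x : Fin n → ℝ) :
    ∑ h, (∑ i, E h i * x i) * w h = ∑ i, (∑ h, w h * E h i) * x i := by
  simp_rw [Finset.sum_mul]
  rw [Finset.sum_comm]
  exact Finset.sum_congr rfl fun i _ => Finset.sum_congr rfl fun h _ => by ring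

lemma sum_mul_swap (n H : ℕ) (E : Fin H → Fin n → ℝ) (w : Fin H → ℝ) (x : Fin n → ℝ) :
    ∑ h, ((1 / (n:ℝ)) * ∑ i, E h i * x i) * w h
      = (1 / (n:ℝ)) * ∑ i, (∑ h, w h * E h i) * x i := by
  rw [← swap_sum n H E w x, Finset.mul_sum]
  exact Finset.sum_congr rfl fun h _ => by ring

lemma dot_constraint (n H : ℕ) (E : Fin H → Fin n → ℝ) (b : Fin H → ℝ) (x : Fin n → ℝ)
    (hx : ∀ h, (1 / (n : ℝ)) * ∑ i, E h i * x i = b h) (w : Fin H → ℝ) :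
    (1 / (n : ℝ)) * ∑ i, (∑ h, w h * E h i) * x i = ∑ h, b h * w h := by
  rw [← sum_mul_swap]
  exact Finset.sum_congr rfl fun h _ => by rw [hx h]

lemma clip_mem (t : ℝ) : max (-1) (min t 1) ∈ Set.Icc (-1 : ℝ) 1 :=
  ⟨le_max_left _ _, max_le (by norm_num) (min_le_right _ _)⟩

lemma abs_sub_clip (t : ℝ) : |t - max (-1) (min t 1)| = max |t| 1 - 1 := by
  rcases le_total 1 t with h | h
  · rw [min_eq_right h, max_eq_right (by linarith : (-1:ℝ) ≤ 1),
      abs_of_nonneg (by linarith), abs_of_nonneg (by linarith),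
      max_eq_left h]
  · rcases le_total t (-1) with h' | h'
    · rw [min_eq_left (by linarith), max_eq_left h',
        abs_of_nonpos (by linarith), abs_of_nonpos (by linarith), max_eq_left (by linarith)]
      ring
    · rw [min_eq_left h, max_eq_right h', sub_self, abs_zero, max_eq_right, sub_self]
      rw [abs_le]; exact ⟨h', h⟩

lemma clip_bound (x t : ℝ) (hx : |x| ≤ 1) :
    x * t - x * max (-1) (min t 1) ≤ max |t| 1 - 1 := by
  rw [← mul_sub, ← abs_sub_clip t]
  calc x * (t - max (-1) (min t 1)) ≤ |x * (t - max (-1) (min t 1))| := le_abs_self _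
  _ = |x| * |t - max (-1) (min t 1)| := abs_mul _ _
  _ ≤ 1 * |t - max (-1) (min t 1)| :=
      mul_le_mul_of_nonneg_right hx (abs_nonneg _)
  _ = |t - max (-1) (min t 1)| := one_mul _

lemma loss_rw (n V : ℕ) (hn : 0 < n) (X Xt : Fin V → Fin n → ℝ) :
    (1 / (n:ℝ)) * ∑ i, hammingLoss (fun v => X v i) (fun v => Xt v i)
      = ∑ v, (1 - (1 / (n:ℝ)) * ∑ i, X v i * Xt v i) / 2 := by
  have hn0 : (n:ℝ) ≠ 0 := Nat.cast_ne_zero.mpr hn.ne'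
  unfold hammingLoss
  rw [Finset.sum_comm, Finset.mul_sum]
  refine Finset.sum_congr rfl fun v _ => ?_
  have h1 : ∑ i, (1 - X v i * Xt v i) / 2 = ((n:ℝ) - ∑ i, X v i * Xt v i) / 2 := by
    rw [← Finset.sum_div, Finset.sum_sub_distrib, Finset.sum_const, Finset.card_univ,
      Fintype.card_fin, nsmul_eq_mul, mul_one]
  rw [h1]
  field_simp

lemma loss_le_phi (n H : ℕ) (hn : 0 < n) (E : Fin H → Fin n → ℝ) (b : Fin H → ℝ)
    (w : Fin H → ℝ) (x : Fin n → ℝ) (hx : ∀ i, x i ∈ Set.Icc (-1:ℝ) 1)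
    (hxb : ∀ h, (1 / (n:ℝ)) * ∑ i, E h i * x i = b h) :
    (1 - (1 / (n:ℝ)) * ∑ i, x i * max (-1) (min (∑ h, w h * E h i) 1)) / 2
      ≤ (-(∑ h, b h * w h) + (1 / (n:ℝ)) * ∑ i, max |∑ h, w h * E h i| 1) / 2 := by
  have hn0 : (0:ℝ) < n := by exact_mod_cast hn
  have hdc : (1 / (n:ℝ)) * ∑ i, (∑ h, w h * E h i) * x i = ∑ h, b h * w h :=
    dot_constraint n H E b x hxb w
  have hstep : ∀ i, (∑ h, w h * E h i) * x i
      - x i * max (-1) (min (∑ h, w h * E h i) 1) ≤ max |∑ h, w h * E h i| 1 - 1 := by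
    intro i
    have h := clip_bound (x i) (∑ h, w h * E h i) (abs_le.mpr ⟨(hx i).1, (hx i).2⟩)
    have hc : (∑ h, w h * E h i) * x i = x i * (∑ h, w h * E h i) := mul_comm _ _
    linarith
  have hsum := Finset.sum_le_sum (fun i (_ : i ∈ Finset.univ) => hstep i)
  rw [Finset.sum_sub_distrib, Finset.sum_sub_distrib, Finset.sum_const, Finset.card_univ,
    Fintype.card_fin, nsmul_eq_mul, mul_one] at hsum
  have h2 := mul_le_mul_of_nonneg_left hsum (le_of_lt (by positivity : (0:ℝ) < 1 / n))
  rw [mul_sub, mul_sub, hdc] at h2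
  have h3 : (1 / (n:ℝ)) * (n:ℝ) = 1 := by field_simp
  rw [h3] at h2
  linarith

lemma avg_dot_bound (n : ℕ) (x y : Fin n → ℝ) (hx : ∀ i, |x i| ≤ 1) (hy : ∀ i, |y i| ≤ 1) :
    |(1 / (n : ℝ)) * ∑ i, x i * y i| ≤ 1 := by
  rcases Nat.eq_zero_or_pos n with rfl | hn
  · simp
  have hn' : (0:ℝ) < n := by exact_mod_cast hn
  rw [abs_mul, abs_of_nonneg (by positivity : (0:ℝ) ≤ 1 / n)]
  have h1 : |∑ i, x i * y i| ≤ (n : ℝ) := by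
    calc |∑ i, x i * y i| ≤ ∑ i, |x i * y i| := Finset.abs_sum_le_sum_abs _ _
    _ ≤ ∑ _i : Fin n, (1:ℝ) := Finset.sum_le_sum fun i _ => by
        rw [abs_mul]
        calc |x i| * |y i| ≤ 1 * 1 :=
              mul_le_mul (hx i) (hy i) (abs_nonneg _) zero_le_one
        _ = 1 := one_mul 1
    _ = (n : ℝ) := by simp
  calc 1 / (n:ℝ) * |∑ i, x i * y i| ≤ 1 / (n:ℝ) * (n:ℝ) :=
        mul_le_mul_of_nonneg_left h1 (by positivity)
  _ = 1 := by field_simp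

/-- The objective `φ` is nonnegative whenever the feasible set is nonempty. -/
lemma phi_nonneg (n H : ℕ) (hn : 0 < n) (E : Fin H → Fin n → ℝ) (b : Fin H → ℝ)
    (x : Fin n → ℝ) (hx : ∀ i, x i ∈ Set.Icc (-1:ℝ) 1)
    (hxb : ∀ h, (1 / (n:ℝ)) * ∑ i, E h i * x i = b h) (w : Fin H → ℝ) :
    0 ≤ -(∑ h, b h * w h) + (1 / (n:ℝ)) * ∑ i, max |∑ h, w h * E h i| 1 := by
  have hb : ∑ h, b h * w h = (1 / (n:ℝ)) * ∑ i, (∑ h, w h * E h i) * x i :=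
    (dot_constraint n H E b x hxb w).symm
  have hle : (1 / (n:ℝ)) * ∑ i, (∑ h, w h * E h i) * x i
      ≤ (1 / (n:ℝ)) * ∑ i, max |∑ h, w h * E h i| 1 := by
    have hn0 : (0:ℝ) < n := by exact_mod_cast hn
    refine mul_le_mul_of_nonneg_left (Finset.sum_le_sum fun i _ => ?_) (by positivity)
    have hxi : |x i| ≤ 1 := abs_le.mpr ⟨(hx i).1, (hx i).2⟩
    calc (∑ h, w h * E h i) * x i ≤ |(∑ h, w h * E h i) * x i| := le_abs_self _
    _ = |∑ h, w h * E h i| * |x i| := abs_mul _ _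
    _ ≤ |∑ h, w h * E h i| * 1 := mul_le_mul_of_nonneg_left hxi (abs_nonneg _)
    _ ≤ max |∑ h, w h * E h i| 1 := by rw [mul_one]; exact le_max_left _ _
  linarith [hb ▸ hle]

noncomputable def dualMap (n H : ℕ) (E : Fin H → Fin n → ℝ) (d : Fin n → ℝ) :
    (Fin n → ℝ) →ₗ[ℝ] (Fin H → ℝ) × ℝ where
  toFun x := (fun h => (1 / (n : ℝ)) * ∑ i, E h i * x i, (1 / (n : ℝ)) * ∑ i, d i * x i)
  map_add' x y := by
    simp only [Prod.mk_add_mk, Prod.mk.injEq]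
    constructor
    · funext h
      simp only [Pi.add_apply, mul_add, Finset.sum_add_distrib, Finset.mul_sum]
    · simp only [Pi.add_apply, mul_add, Finset.sum_add_distrib, Finset.mul_sum]
  map_smul' c x := by
    simp only [RingHom.id_apply, Prod.smul_mk, Prod.mk.injEq, smul_eq_mul]
    constructor
    · funext h
      simp only [Pi.smul_apply, smul_eq_mul, Finset.mul_sum]
      exact Finset.sum_congr rfl fun i _ => by ring
    · simp only [Finset.mul_sum, Pi.smul_apply, smul_eq_mul]
      exact Finset.sum_congr rfl fun i _ => by ring

lemma exists_primal (n H : ℕ) (hn : 0 < n)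
    (E : Fin H → Fin n → ℝ) (b : Fin H → ℝ) (d : Fin n → ℝ) (hd : ∀ i, |d i| ≤ 1)
    (hfeas : ∃ x : Fin n → ℝ, (∀ i, x i ∈ Set.Icc (-1:ℝ) 1) ∧
      ∀ h, (1 / (n:ℝ)) * ∑ i, E h i * x i = b h) :
    ∃ x : Fin n → ℝ, (∀ i, x i ∈ Set.Icc (-1:ℝ) 1) ∧
      (∀ h, (1 / (n:ℝ)) * ∑ i, E h i * x i = b h) ∧
      (⨅ w : Fin H → ℝ,
        (-(∑ h, b h * w h) + (1 / (n:ℝ)) * ∑ i, max |∑ h, w h * E h i| 1))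
        ≤ 1 + (1 / (n:ℝ)) * ∑ i, d i * x i := by
  classical
  obtain ⟨x₀, hx₀c, hx₀b⟩ := hfeas
  have hn0 : (0:ℝ) < n := by exact_mod_cast hn
  set φ : (Fin H → ℝ) → ℝ := fun w =>
    -(∑ h, b h * w h) + (1 / (n:ℝ)) * ∑ i, max |∑ h, w h * E h i| 1 with hφdef
  have hφ0 : ∀ w, 0 ≤ φ w := fun w => phi_nonneg n H hn E b x₀ hx₀c hx₀b w
  have hbdd : BddBelow (Set.range φ) := ⟨0, by rintro _ ⟨w, rfl⟩; exact hφ0 w⟩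
  set g : (Fin n → ℝ) → ℝ := fun x => (1 / (n:ℝ)) * ∑ i, d i * x i with hgdef
  set Cube : Set (Fin n → ℝ) := Set.univ.pi fun _ : Fin n => Set.Icc (-1:ℝ) 1 with hCdef
  have hmemCube : ∀ x : Fin n → ℝ, x ∈ Cube ↔ ∀ i, x i ∈ Set.Icc (-1:ℝ) 1 := by
    intro x; exact Set.mem_univ_pi
  have hCubeCompact : IsCompact Cube := isCompact_univ_pi fun _ => isCompact_Icc
  have hcont : ∀ c : Fin n → ℝ, Continuous fun x : Fin n → ℝ => (1 / (n:ℝ)) * ∑ i, c i * x i :=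
    fun c => continuous_const.mul
      (continuous_finset_sum _ fun i _ => continuous_const.mul (continuous_apply i))
  set K : Set (Fin n → ℝ) := {x | (∀ i, x i ∈ Set.Icc (-1:ℝ) 1) ∧
    ∀ h, (1 / (n:ℝ)) * ∑ i, E h i * x i = b h} with hKdef
  have hKsub : K ⊆ Cube := fun x hx => (hmemCube x).mpr hx.1
  have hKclosed : IsClosed K := by
    have hrw : K = Cube ∩ ⋂ h, {x | (1 / (n:ℝ)) * ∑ i, E h i * x i = b h} := by
      ext x
      simp only [hKdef, Set.mem_setOf_eq, Set.mem_inter_iff, hmemCube, Set.mem_iInter]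
    rw [hrw]
    exact (isClosed_set_pi fun i _ => isClosed_Icc).inter
      (isClosed_iInter fun h => isClosed_eq (hcont (E h)) continuous_const)
  have hKcompact : IsCompact K := hCubeCompact.of_isClosed_subset hKclosed hKsub
  have hKne : K.Nonempty := ⟨x₀, hx₀c, hx₀b⟩
  obtain ⟨xs, hxsK, hxsmax⟩ := hKcompact.exists_isMaxOn hKne (hcont d).continuousOn
  refine ⟨xs, hxsK.1, hxsK.2, ?_⟩
  by_contra hcon
  push_neg at hcon
  set P : ℝ := g xs with hPdef
  have hcon' : 1 + P < ⨅ w, φ w := hcon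
  set I : ℝ := ⨅ w, φ w with hIdef
  set δ : ℝ := (I - (1 + P)) / 2 with hδdef
  have hδpos : 0 < δ := by simp only [hδdef]; linarith
  set A := dualMap n H E d with hAdef
  set S : Set ((Fin H → ℝ) × ℝ) := A '' Cube with hSdef
  have hSconv : Convex ℝ S := (convex_pi fun _ _ => convex_Icc _ _).linear_image A
  have hScompact : IsCompact S := hCubeCompact.image A.continuous_of_finiteDimensional
  have hpS : ((b, P + δ) : (Fin H → ℝ) × ℝ) ∉ S := by
    rintro ⟨x, hxC, hAx⟩
    have hfst : (fun h => (1 / (n:ℝ)) * ∑ i, E h i * x i) = b := congrArg Prod.fst hAx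
    have hsnd : g x = P + δ := congrArg Prod.snd hAx
    have hxK : x ∈ K := ⟨(hmemCube x).mp hxC, fun h => congrFun hfst h⟩
    have hle : g x ≤ g xs := hxsmax hxK
    rw [hsnd, ← hPdef] at hle
    linarith
  obtain ⟨f, u, hfp, hfS⟩ :=
    geometric_hahn_banach_point_closed hSconv hScompact.isClosed hpS
  set s : ℝ := f (0, 1) with hsdef
  set w : Fin H → ℝ := fun h => f (Pi.single h 1, 0) with hwdef
  have hflin : ∀ (c : Fin H → ℝ) (t : ℝ), f (c, t) = (∑ h, c h * w h) + t * s := by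
    intro c t
    have hrep : ((c, t) : (Fin H → ℝ) × ℝ)
        = (∑ h, c h • ((Pi.single h 1 : Fin H → ℝ), (0:ℝ))) + t • ((0 : Fin H → ℝ), (1:ℝ)) := by
      refine Prod.ext ?_ ?_
      · simp only [Prod.smul_mk, smul_zero, smul_eq_mul, mul_one, mul_zero,
          Prod.fst_add, Prod.fst_sum]
        funext j
        simp only [Finset.sum_apply, Pi.add_apply, Pi.zero_apply, add_zero,
          Pi.smul_apply, smul_eq_mul, Pi.single_apply, mul_ite, mul_one, mul_zero]
        simp
      · simp only [Prod.smul_mk, smul_zero, smul_eq_mul, mul_one, mul_zero,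
          Prod.snd_add, Prod.snd_sum]
        simp
    rw [hrep, map_add, map_sum, map_smul]
    simp only [map_smul, smul_eq_mul, hsdef, hwdef]
  have hAmem : ∀ x : Fin n → ℝ, (∀ i, x i ∈ Set.Icc (-1:ℝ) 1) → A x ∈ S :=
    fun x hx => ⟨x, (hmemCube x).mpr hx, rfl⟩
  have hfA : ∀ x : Fin n → ℝ,
      f (A x) = (∑ h, ((1 / (n:ℝ)) * ∑ i, E h i * x i) * w h) + g x * s := by
    intro x
    have : A x = ((fun h => (1 / (n:ℝ)) * ∑ i, E h i * x i), g x) := rfl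
    rw [this, hflin]
  have hsneg : s < 0 := by
    have h2 : u < f (A xs) := hfS _ (hAmem xs hxsK.1)
    have h3 : f (A xs) = (∑ h, b h * w h) + P * s := by
      rw [hfA xs]
      congr 1
      exact Finset.sum_congr rfl fun h _ => by rw [hxsK.2 h]
    have h4 : f (b, P + δ) = (∑ h, b h * w h) + (P + δ) * s := hflin b (P + δ)
    have h5 : f (b, P + δ) < f (A xs) := lt_trans hfp h2
    rw [h3, h4] at h5
    nlinarith
  set v : Fin H → ℝ := fun h => w h / (-s) with hvdef
  have hs' : 0 < -s := by linarith
  have hs0 : -s ≠ 0 := ne_of_gt hs'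
  have hw : ∀ h, w h = v h * (-s) := by
    intro h
    simp only [hvdef]
    rw [div_mul_cancel₀ _ hs0]
  set c : Fin n → ℝ := fun i => d i - ∑ h, v h * E h i with hcdef
  set xh : Fin n → ℝ := fun i => if 0 ≤ c i then 1 else -1 with hxhdef
  have hxhc : ∀ i, xh i ∈ Set.Icc (-1:ℝ) 1 := by
    intro i
    by_cases h : 0 ≤ c i <;> simp [hxhdef, h]
  have hcx : ∀ i, c i * xh i = |c i| := by
    intro i
    by_cases h : 0 ≤ c i
    · simp [hxhdef, h, abs_of_nonneg h]
    · simp only [hxhdef, h, if_false]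
      rw [abs_of_neg (lt_of_not_ge h)]; ring
  -- the separating inequality at xh
  have hineq : f (b, P + δ) < f (A xh) := lt_trans hfp (hfS _ (hAmem xh hxhc))
  rw [hflin b (P + δ), hfA xh] at hineq
  -- rewrite everything in terms of v
  have hbw : ∑ h, b h * w h = (∑ h, b h * v h) * (-s) := by
    rw [Finset.sum_mul]
    exact Finset.sum_congr rfl fun h _ => by rw [hw h]; ring
  have hwE : ∀ i, ∑ h, w h * E h i = (∑ h, v h * E h i) * (-s) := by
    intro i
    rw [Finset.sum_mul]
    exact Finset.sum_congr rfl fun h _ => by rw [hw h]; ring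
  have hEw : ∑ h, ((1 / (n:ℝ)) * ∑ i, E h i * xh i) * w h
      = ((1 / (n:ℝ)) * ∑ i, (∑ h, v h * E h i) * xh i) * (-s) := by
    rw [sum_mul_swap n H E w xh]
    have h6 : ∑ i, (∑ h, w h * E h i) * xh i
        = (∑ i, (∑ h, v h * E h i) * xh i) * (-s) := by
      rw [Finset.sum_mul]
      exact Finset.sum_congr rfl fun i _ => by rw [hwE i]; ring
    rw [h6]; ring
  rw [hbw, hEw] at hineq
  set Bv : ℝ := ∑ h, b h * v h with hBvdef
  set T : ℝ := (1 / (n:ℝ)) * ∑ i, (∑ h, v h * E h i) * xh i with hTdef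
  -- divide by -s
  have hdiv : Bv - (P + δ) < T - g xh := by
    have e1 : (-s) * (Bv - (P + δ)) = Bv * -s + (P + δ) * s := by ring
    have e2 : (-s) * (T - g xh) = T * -s + g xh * s := by ring
    have h5 : (-s) * (Bv - (P + δ)) < (-s) * (T - g xh) := by rw [e1, e2]; exact hineq
    exact (mul_lt_mul_iff_right₀ hs').mp h5
  -- g xh - T = (1/n) ∑ |c i|
  have hGT : g xh - T = (1 / (n:ℝ)) * ∑ i, |c i| := by
    rw [hgdef, hTdef]
    simp only
    rw [← mul_sub, ← Finset.sum_sub_distrib]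
    congr 1
    refine Finset.sum_congr rfl fun i _ => ?_
    rw [← sub_mul]
    exact hcx i
  have hkey : Bv + (1 / (n:ℝ)) * ∑ i, |c i| < P + δ := by linarith
  -- now bound I via φ(-v)
  have hφv : φ (fun h => -(v h)) ≤ Bv + (1 / (n:ℝ)) * ∑ i, |c i| + 1 := by
    rw [hφdef]
    simp only
    have h1 : -(∑ h, b h * -(v h)) = Bv := by
      simp [hBvdef, mul_neg]
    have h2 : (1 / (n:ℝ)) * ∑ i, max |∑ h, -(v h) * E h i| 1
        ≤ (1 / (n:ℝ)) * ∑ i, (|c i| + 1) := by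
      refine mul_le_mul_of_nonneg_left (Finset.sum_le_sum fun i _ => ?_) (by positivity)
      have habs : |∑ h, -(v h) * E h i| = |∑ h, v h * E h i| := by
        rw [show ∑ h, -(v h) * E h i = -(∑ h, v h * E h i) from by
          rw [← Finset.sum_neg_distrib]; exact Finset.sum_congr rfl fun h _ => by ring]
        exact abs_neg _
      rw [habs]
      refine max_le ?_ (by linarith [abs_nonneg (c i)])
      calc |∑ h, v h * E h i| = |d i - c i| := by rw [hcdef]; congr 1; ring
      _ ≤ |d i| + |c i| := abs_sub _ _
      _ ≤ |c i| + 1 := by have := hd i; linarith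
    have h3 : (1 / (n:ℝ)) * ∑ i, (|c i| + 1) = (1 / (n:ℝ)) * ∑ i, |c i| + 1 := by
      rw [Finset.sum_add_distrib, Finset.sum_const, Finset.card_univ, Fintype.card_fin,
        nsmul_eq_mul, mul_one, mul_add]
      field_simp
    rw [h1]
    linarith [h2, h3.le]
  have hIle : I ≤ φ (fun h => -(v h)) := ciInf_le hbdd _
  have hfin : I ≤ P + δ + 1 :=
    le_trans hIle (le_trans hφv (by linarith))
  rw [hδdef] at hfin
  linarith

/-- Minimax autoencoding with Hamming loss: the minimax value equals
`(1/2)·Σ_v inf_w [-b_vᵀw + (1/n)·Σᵢ max(|wᵀe⁽ⁱ⁾|, 1)]`, and if `w_v*` attains each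
infimum then the clipped-linear reconstructions `x̃_v⁽ⁱ⁾ = max(-1, min(w_v*ᵀe⁽ⁱ⁾, 1))`
attain the minimax value. -/
theorem hamming_loss_minimax
    (n V H : ℕ) (hn : 0 < n) (hV : 0 < V) (hH : 0 < H)
    (E : Fin H → Fin n → ℝ) (hE : ∀ h i, E h i ∈ Set.Icc (-1 : ℝ) 1)
    (B : Fin V → Fin H → ℝ)
    (hfeas : ∃ X : Fin V → Fin n → ℝ,
      (∀ v i, X v i ∈ Set.Icc (-1 : ℝ) 1) ∧
      ∀ v h, (1 / (n : ℝ)) * ∑ i, E h i * X v i = B v h) :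
    (⨅ Xt : {Xt : Fin V → Fin n → ℝ // ∀ v i, Xt v i ∈ Set.Icc (-1 : ℝ) 1},
      ⨆ X : {X : Fin V → Fin n → ℝ //
          (∀ v i, X v i ∈ Set.Icc (-1 : ℝ) 1) ∧
          ∀ v h, (1 / (n : ℝ)) * ∑ i, E h i * X v i = B v h},
        (1 / (n : ℝ)) * ∑ i, hammingLoss (fun v => X.1 v i) (fun v => Xt.1 v i))
      = (1 / 2) * ∑ v, ⨅ w : Fin H → ℝ,
          (-(∑ h, B v h * w h) + (1 / (n : ℝ)) * ∑ i, max |∑ h, w h * E h i| 1)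
    ∧
    ∀ wstar : Fin V → Fin H → ℝ,
      (∀ v, ∀ w : Fin H → ℝ,
        (-(∑ h, B v h * wstar v h)
            + (1 / (n : ℝ)) * ∑ i, max |∑ h, wstar v h * E h i| 1)
          ≤ (-(∑ h, B v h * w h) + (1 / (n : ℝ)) * ∑ i, max |∑ h, w h * E h i| 1)) →
      (⨆ X : {X : Fin V → Fin n → ℝ //
          (∀ v i, X v i ∈ Set.Icc (-1 : ℝ) 1) ∧
          ∀ v h, (1 / (n : ℝ)) * ∑ i, E h i * X v i = B v h},
        (1 / (n : ℝ)) * ∑ i, hammingLoss (fun v => X.1 v i)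
          (fun v => max (-1) (min (∑ h, wstar v h * E h i) 1)))
        = (1 / 2) * ∑ v, ⨅ w : Fin H → ℝ,
            (-(∑ h, B v h * w h) + (1 / (n : ℝ)) * ∑ i, max |∑ h, w h * E h i| 1) := by
  classical
  obtain ⟨X₀, hX₀c, hX₀f⟩ := hfeas
  have hn0 : (0:ℝ) < n := by exact_mod_cast hn
  have hV0 : (0:ℝ) < V := by exact_mod_cast hV
  haveI hne : Nonempty {X : Fin V → Fin n → ℝ //
      (∀ v i, X v i ∈ Set.Icc (-1 : ℝ) 1) ∧
      ∀ v h, (1 / (n : ℝ)) * ∑ i, E h i * X v i = B v h} := ⟨⟨X₀, hX₀c, hX₀f⟩⟩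
  haveI hne2 : Nonempty {Xt : Fin V → Fin n → ℝ // ∀ v i, Xt v i ∈ Set.Icc (-1 : ℝ) 1} :=
    ⟨⟨fun _ _ => 0, fun v i => by norm_num⟩⟩
  have hφ0 : ∀ (v : Fin V) (w : Fin H → ℝ),
      0 ≤ -(∑ h, B v h * w h) + (1 / (n:ℝ)) * ∑ i, max |∑ h, w h * E h i| 1 :=
    fun v w => phi_nonneg n H hn E (B v) (fun i => X₀ v i)
      (fun i => hX₀c v i) (fun h => hX₀f v h) w
  have hbddφ : ∀ v : Fin V, BddBelow (Set.range fun w : Fin H → ℝ =>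
      -(∑ h, B v h * w h) + (1 / (n:ℝ)) * ∑ i, max |∑ h, w h * E h i| 1) :=
    fun v => ⟨0, by rintro _ ⟨w, rfl⟩; exact hφ0 v w⟩
  have hFmem : ∀ (X : {X : Fin V → Fin n → ℝ //
        (∀ v i, X v i ∈ Set.Icc (-1 : ℝ) 1) ∧
        ∀ v h, (1 / (n : ℝ)) * ∑ i, E h i * X v i = B v h})
      (Xt : Fin V → Fin n → ℝ), (∀ v i, Xt v i ∈ Set.Icc (-1:ℝ) 1) →
      (1 / (n:ℝ)) * ∑ i, hammingLoss (fun v => X.1 v i) (fun v => Xt v i)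
        ∈ Set.Icc (0:ℝ) (V:ℝ) := by
    intro X Xt hXt
    rw [loss_rw n V hn X.1 Xt]
    have hterm : ∀ v : Fin V,
        |(1 / (n:ℝ)) * ∑ i, X.1 v i * Xt v i| ≤ 1 := fun v =>
      avg_dot_bound n (fun i => X.1 v i) (fun i => Xt v i)
        (fun i => abs_le.mpr ⟨(X.2.1 v i).1, (X.2.1 v i).2⟩)
        (fun i => abs_le.mpr ⟨(hXt v i).1, (hXt v i).2⟩)
    constructor
    · refine Finset.sum_nonneg fun v _ => ?_
      have h := abs_le.mp (hterm v)
      linarith [h.2]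
    · calc ∑ v, (1 - (1/(n:ℝ)) * ∑ i, X.1 v i * Xt v i)/2
          ≤ ∑ _v : Fin V, (1:ℝ) := Finset.sum_le_sum fun v _ => by
            have h := abs_le.mp (hterm v)
            linarith [h.1]
      _ = (V:ℝ) := by simp
  have hbddS : ∀ (Xt : Fin V → Fin n → ℝ), (∀ v i, Xt v i ∈ Set.Icc (-1:ℝ) 1) →
      BddAbove (Set.range fun X : {X : Fin V → Fin n → ℝ //
          (∀ v i, X v i ∈ Set.Icc (-1 : ℝ) 1) ∧
          ∀ v h, (1 / (n : ℝ)) * ∑ i, E h i * X v i = B v h} =>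
        (1/(n:ℝ)) * ∑ i, hammingLoss (fun v => X.1 v i) (fun v => Xt v i)) :=
    fun Xt hXt => ⟨(V:ℝ), by rintro _ ⟨X, rfl⟩; exact (hFmem X Xt hXt).2⟩
  have hupper : ∀ (w : Fin V → Fin H → ℝ) (X : {X : Fin V → Fin n → ℝ //
        (∀ v i, X v i ∈ Set.Icc (-1 : ℝ) 1) ∧
        ∀ v h, (1 / (n : ℝ)) * ∑ i, E h i * X v i = B v h}),
      (1/(n:ℝ)) * ∑ i, hammingLoss (fun v => X.1 v i)
        (fun v => max (-1) (min (∑ h, w v h * E h i) 1))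
      ≤ (1/2) * ∑ v, (-(∑ h, B v h * w v h)
          + (1/(n:ℝ)) * ∑ i, max |∑ h, w v h * E h i| 1) := by
    intro w X
    rw [loss_rw n V hn X.1 (fun v i => max (-1) (min (∑ h, w v h * E h i) 1))]
    refine le_trans (Finset.sum_le_sum fun v (_ : v ∈ Finset.univ) =>
      loss_le_phi n H hn E (B v) (w v)
        (fun i => X.1 v i) (fun i => X.2.1 v i) (fun h => X.2.2 v h)) ?_
    rw [Finset.mul_sum]
    exact le_of_eq (Finset.sum_congr rfl fun v _ => by ring)
  have hlower : ∀ (Xt : Fin V → Fin n → ℝ), (∀ v i, Xt v i ∈ Set.Icc (-1:ℝ) 1) →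
      ∃ X : {X : Fin V → Fin n → ℝ //
          (∀ v i, X v i ∈ Set.Icc (-1 : ℝ) 1) ∧
          ∀ v h, (1 / (n : ℝ)) * ∑ i, E h i * X v i = B v h},
        (1/2) * (∑ v, ⨅ w : Fin H → ℝ,
          (-(∑ h, B v h * w h) + (1/(n:ℝ)) * ∑ i, max |∑ h, w h * E h i| 1))
        ≤ (1/(n:ℝ)) * ∑ i, hammingLoss (fun v => X.1 v i) (fun v => Xt v i) := by
    intro Xt hXt
    have hex : ∀ v : Fin V, ∃ x : Fin n → ℝ, (∀ i, x i ∈ Set.Icc (-1:ℝ) 1) ∧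
        (∀ h, (1/(n:ℝ)) * ∑ i, E h i * x i = B v h) ∧
        (⨅ w : Fin H → ℝ, (-(∑ h, B v h * w h)
            + (1/(n:ℝ)) * ∑ i, max |∑ h, w h * E h i| 1))
          ≤ 1 + (1/(n:ℝ)) * ∑ i, (-(Xt v i)) * x i := by
      intro v
      exact exists_primal n H hn E (B v) (fun i => -(Xt v i))
        (fun i => by rw [abs_neg]; exact abs_le.mpr ⟨(hXt v i).1, (hXt v i).2⟩)
        ⟨X₀ v, fun i => hX₀c v i, fun h => hX₀f v h⟩
    choose x hxc hxb hxI using hex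
    refine ⟨⟨fun v => x v, fun v i => hxc v i, fun v h => hxb v h⟩, ?_⟩
    rw [loss_rw n V hn (fun v => x v) Xt, Finset.mul_sum]
    refine Finset.sum_le_sum fun v _ => ?_
    have h1 : ∑ i, (-(Xt v i)) * x v i = -(∑ i, x v i * Xt v i) := by
      rw [← Finset.sum_neg_distrib]
      exact Finset.sum_congr rfl fun i _ => by ring
    have h2 := hxI v
    rw [h1] at h2
    have h3 : (1/(n:ℝ)) * -(∑ i, x v i * Xt v i)
        = -((1/(n:ℝ)) * ∑ i, x v i * Xt v i) := by ring
    rw [h3] at h2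
    linarith
  have hSnn : ∀ (Xt : {Xt : Fin V → Fin n → ℝ // ∀ v i, Xt v i ∈ Set.Icc (-1:ℝ) 1}),
      (0:ℝ) ≤ ⨆ X : {X : Fin V → Fin n → ℝ //
          (∀ v i, X v i ∈ Set.Icc (-1 : ℝ) 1) ∧
          ∀ v h, (1 / (n : ℝ)) * ∑ i, E h i * X v i = B v h},
        (1/(n:ℝ)) * ∑ i, hammingLoss (fun v => X.1 v i) (fun v => Xt.1 v i) :=
    fun Xt => le_trans (hFmem ⟨X₀, hX₀c, hX₀f⟩ Xt.1 Xt.2).1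
      (le_ciSup (hbddS Xt.1 Xt.2) ⟨X₀, hX₀c, hX₀f⟩)
  constructor
  · apply le_antisymm
    · refine le_of_forall_pos_le_add fun ε hε => ?_
      have hch : ∀ v : Fin V, ∃ w : Fin H → ℝ,
          (-(∑ h, B v h * w h) + (1/(n:ℝ)) * ∑ i, max |∑ h, w h * E h i| 1)
          < (⨅ w : Fin H → ℝ, (-(∑ h, B v h * w h)
              + (1/(n:ℝ)) * ∑ i, max |∑ h, w h * E h i| 1)) + 2*ε/(V:ℝ) := by
        intro v
        refine exists_lt_of_ciInf_lt ?_
        have h : 0 < 2*ε/(V:ℝ) := by positivity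
        exact lt_add_of_pos_right _ h
      choose w hw using hch
      refine le_trans (ciInf_le ⟨0, by rintro _ ⟨Xt, rfl⟩; exact hSnn Xt⟩
        ⟨fun v i => max (-1) (min (∑ h, w v h * E h i) 1),
          fun v i => clip_mem _⟩) ?_
      refine le_trans (ciSup_le fun X => hupper w X) ?_
      refine le_trans (mul_le_mul_of_nonneg_left
        (Finset.sum_le_sum fun v (_ : v ∈ Finset.univ) => (hw v).le)
        (by norm_num : (0:ℝ) ≤ 1/2)) (le_of_eq ?_)
      rw [Finset.sum_add_distrib, Finset.sum_const, Finset.card_univ, Fintype.card_fin,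
        nsmul_eq_mul, mul_add]
      congr 1
      rw [mul_comm ((V:ℝ)) (2*ε/(V:ℝ)), div_mul_cancel₀ _ hV0.ne']
      ring
    · refine le_ciInf fun Xt => ?_
      obtain ⟨X, hX⟩ := hlower Xt.1 Xt.2
      exact hX.trans (le_ciSup (hbddS Xt.1 Xt.2) X)
  · intro wstar hws
    have hirw : ∀ v : Fin V, (-(∑ h, B v h * wstar v h)
          + (1/(n:ℝ)) * ∑ i, max |∑ h, wstar v h * E h i| 1)
        = ⨅ w : Fin H → ℝ, (-(∑ h, B v h * w h)
            + (1/(n:ℝ)) * ∑ i, max |∑ h, w h * E h i| 1) :=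
      fun v => le_antisymm (le_ciInf (hws v)) (ciInf_le (hbddφ v) _)
    apply le_antisymm
    · refine ciSup_le fun X => ?_
      refine le_trans (hupper wstar X) (le_of_eq ?_)
      congr 1
      exact Finset.sum_congr rfl fun v _ => hirw v
    · obtain ⟨X, hX⟩ := hlower (fun v i => max (-1) (min (∑ h, wstar v h * E h i) 1))
        (fun v i => clip_mem _)
      exact hX.trans (le_ciSup (hbddS _ (fun v i => clip_mem _)) X)
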